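/- arXiv:1811.05626 — 2 statements merged into one kernel-verified Lean document; each statement's English description precedes it below -/
import Mathlib

section
/- Let ρ0 be a positive definite density matrix on ℂ^d, ρ̄ a density matrix on ℂ^d, q ≥ 1, and for j ∈ {1,…,q} let ρ(j) := ρ0^{⊗(j−1)} ⊗ ρ̄ ⊗ ρ0^{⊗(q−j)}. Then D( (1/q)·∑_{j=1}^q ρ(j) ‖ ρ0^{⊗q} ) ≤ (1/q)·( tr(ρ̄²·ρ0⁻¹) − 1 ); moreover, if λ_min(ρ0) ≥ λ̃ for some λ̃ > 0, then D( (1/q)·∑_{j=1}^q ρ(j) ‖ ρ0^{⊗q} ) ≤ (1/q)·( d/λ̃ − 1 ). -/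
open Matrix BigOperators Finset
open scoped ComplexOrder

namespace Covert

noncomputable section

/-- Trace norm: sum of singular values of `X`, i.e. `tr √(Xᴴ X)`. -/
def traceNorm {n : Type*} [Fintype n] [DecidableEq n] (X : Matrix n n ℂ) : ℝ :=
  ∑ i, Real.sqrt ((Matrix.isHermitian_conjTranspose_mul_self X).eigenvalues i)

/-- Frobenius norm `√(tr (Xᴴ X))`. -/
def frobeniusNorm {n : Type*} [Fintype n] [DecidableEq n] (X : Matrix n n ℂ) : ℝ :=
  Real.sqrt ((Matrix.trace (Xᴴ * X)).re)

/-- smallest eigenvalue of a Hermitian matrix -/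
def eigMin {n : Type*} [Fintype n] [DecidableEq n] {A : Matrix n n ℂ}
    (hA : A.IsHermitian) : ℝ := ⨅ i, hA.eigenvalues i

/-- largest eigenvalue of a Hermitian matrix -/
def eigMax {n : Type*} [Fintype n] [DecidableEq n] {A : Matrix n n ℂ}
    (hA : A.IsHermitian) : ℝ := ⨆ i, hA.eigenvalues i

/-- largest singular value -/
def sigmaMax {n : Type*} [Fintype n] [DecidableEq n] (X : Matrix n n ℂ) : ℝ :=
  ⨆ i, Real.sqrt ((Matrix.isHermitian_conjTranspose_mul_self X).eigenvalues i)

/-- functional calculus `f(A)` for a Hermitian matrix `A`, extended by `0` junk value. -/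
def matFun {n : Type*} [Fintype n] [DecidableEq n] (f : ℝ → ℝ) (A : Matrix n n ℂ) :
    Matrix n n ℂ :=
  if hA : A.IsHermitian then hA.cfc f else 0

/-- matrix logarithm via functional calculus, with the convention `log 0 = 0`. -/
def matLog {n : Type*} [Fintype n] [DecidableEq n] (A : Matrix n n ℂ) : Matrix n n ℂ :=
  matFun Real.log A

/-- matrix real power via functional calculus (`0 ^ a = 0` for `a ≠ 0`). -/
def matPow {n : Type*} [Fintype n] [DecidableEq n] (A : Matrix n n ℂ) (a : ℝ) : Matrix n n ℂ :=
  matFun (fun x => x ^ a) A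

/-- von Neumann entropy `H(ρ) = -tr(ρ log ρ)`. -/
def vnEntropy {n : Type*} [Fintype n] [DecidableEq n] (ρ : Matrix n n ℂ) : ℝ :=
  -((ρ * matLog ρ).trace).re

/-- quantum relative entropy `D(ρ‖σ) = tr(ρ (log ρ - log σ))`. -/
def qRelEntropy {n : Type*} [Fintype n] [DecidableEq n] (ρ σ : Matrix n n ℂ) : ℝ :=
  ((ρ * (matLog ρ - matLog σ)).trace).re

/-- a density matrix: positive semidefinite with unit trace. -/
def IsDensity {n : Type*} [Fintype n] [DecidableEq n] (ρ : Matrix n n ℂ) : Prop :=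
  ρ.PosSemidef ∧ ρ.trace = 1

end

end Covert

open Covert

/-- Kronecker/tensor product of a family of `d × d` matrices, indexed by tuples. -/
noncomputable def tensorFam {q d : ℕ} (A : Fin q → Matrix (Fin d) (Fin d) ℂ) :
    Matrix (Fin q → Fin d) (Fin q → Fin d) ℂ :=
  Matrix.of fun i j => ∏ t, A t (i t) (j t)

/-!
Diagonalize `ρ = ∑ pᵢ |uᵢ⟩⟨uᵢ|` and `σ = ∑ sⱼ |vⱼ⟩⟨vⱼ|` and put `cᵢⱼ = |⟨uᵢ, vⱼ⟩|²`, whose rows sum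
to `1`. Then `D(ρ‖σ) = ∑ᵢⱼ cᵢⱼ pᵢ (log pᵢ - log sⱼ)` and `tr(ρ²σ⁻¹) = ∑ᵢⱼ cᵢⱼ pᵢ² / sⱼ`, so
`log x ≤ x - 1` applied to `x = pᵢ / sⱼ` gives `D(ρ‖σ) ≤ tr(ρ²σ⁻¹) - 1`.

For `σ = ρ0^{⊗q}` the trace `tr(ρ(j) ρ(k) σ⁻¹)` factorizes over the tensor slots: it equals
`T = tr(ρ̄² ρ0⁻¹)` if `j = k` and `1` otherwise. Hence the uniform mixture `ρ̂` of the `ρ(j)` has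
`tr(ρ̂² σ⁻¹) = 1 + (T - 1) / q`. Finally `T = ∑ᵢⱼ cᵢⱼ rᵢ² / μⱼ ≤ ∑ᵢ rᵢ² / λ̃ ≤ 1 / λ̃ ≤ d / λ̃`.
-/

lemma Real.mul_log_sub_mul_log_le {p s : ℝ} (hp : 0 ≤ p) (hs : 0 < s) :
    p * Real.log p - p * Real.log s ≤ p ^ 2 * s⁻¹ - p := by
  rcases hp.eq_or_lt with rfl | hp
  · simp
  have h := Real.log_le_sub_one_of_pos (div_pos hp hs)
  rw [Real.log_div hp.ne' hs.ne'] at h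
  have := mul_le_mul_of_nonneg_left h hp.le
  field_simp at this ⊢
  linarith

namespace Matrix

lemma trace_diagonal_mul_mul_diagonal_mul_star {n R : Type*} [Fintype n] [DecidableEq n]
    [CommRing R] [StarRing R] (a b : n → R) (N : Matrix n n R) :
    (diagonal a * N * diagonal b * star N).trace =
      ∑ i, ∑ j, a i * b j * (N i j * star (N i j)) := by
  simp only [trace, diag_apply]
  refine Finset.sum_congr rfl fun i _ => ?_
  rw [mul_apply]
  refine Finset.sum_congr rfl fun j _ => ?_
  simp only [mul_diagonal, diagonal_mul, star_apply]
  ring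

namespace IsHermitian

variable {n : Type*} [Fintype n] [DecidableEq n] {A B : Matrix n n ℂ}

noncomputable def eigenOverlap (hA : A.IsHermitian) (hB : B.IsHermitian) (i j : n) : ℝ :=
  Complex.normSq ((star (hA.eigenvectorUnitary : Matrix n n ℂ) * hB.eigenvectorUnitary) i j)

lemma eigenOverlap_nonneg (hA : A.IsHermitian) (hB : B.IsHermitian) (i j : n) :
    0 ≤ eigenOverlap hA hB i j :=
  Complex.normSq_nonneg _

lemma eigenOverlap_self (hA : A.IsHermitian) (i j : n) :
    eigenOverlap hA hA i j = if i = j then 1 else 0 := by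
  rw [eigenOverlap, Unitary.star_mul_self_of_mem hA.eigenvectorUnitary.2, one_apply]
  split_ifs <;> simp

lemma sum_eigenOverlap (hA : A.IsHermitian) (hB : B.IsHermitian) (i : n) :
    ∑ j, eigenOverlap hA hB i j = 1 := by
  set U := (hA.eigenvectorUnitary : Matrix n n ℂ)
  set V := (hB.eigenvectorUnitary : Matrix n n ℂ)
  have hN : (star U * V) * star (star U * V) = 1 := by
    rw [star_mul, star_star, Matrix.mul_assoc, ← Matrix.mul_assoc V,
      Unitary.mul_star_self_of_mem hB.eigenvectorUnitary.2, Matrix.one_mul,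
      Unitary.star_mul_self_of_mem hA.eigenvectorUnitary.2]
  have hii := congrFun (congrFun hN i) i
  rw [mul_apply, one_apply_eq] at hii
  simp only [star_apply, RCLike.star_def, Complex.mul_conj] at hii
  exact_mod_cast hii

lemma re_trace_cfc_mul_cfc (hA : A.IsHermitian) (hB : B.IsHermitian) (f g : ℝ → ℝ) :
    (cfc f A * cfc g B).trace.re =
      ∑ i, ∑ j, f (hA.eigenvalues i) * g (hB.eigenvalues j) * eigenOverlap hA hB i j := by
  set U := (hA.eigenvectorUnitary : Matrix n n ℂ)
  set V := (hB.eigenvectorUnitary : Matrix n n ℂ)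
  rw [hA.cfc_eq, hB.cfc_eq, IsHermitian.cfc, IsHermitian.cfc]
  simp only [Unitary.conjStarAlgAut_apply]
  suffices h : (U * diagonal _ * star U * (V * diagonal _ * star V)).trace =
      ∑ i, ∑ j, ((f (hA.eigenvalues i) * g (hB.eigenvalues j) * eigenOverlap hA hB i j : ℝ) : ℂ) by
    rw [h]
    simp only [Complex.re_sum, Complex.ofReal_re]
  calc (U * diagonal _ * star U * (V * diagonal _ * star V)).trace
      = (diagonal (RCLike.ofReal ∘ f ∘ hA.eigenvalues) * (star U * V) *
          diagonal (RCLike.ofReal ∘ g ∘ hB.eigenvalues) * star (star U * V)).trace := by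
        rw [star_mul, star_star, Matrix.mul_assoc U, Matrix.mul_assoc U, trace_mul_comm U]
        simp only [Matrix.mul_assoc]
    _ = _ := by
        rw [trace_diagonal_mul_mul_diagonal_mul_star]
        push_cast
        simp only [eigenOverlap, RCLike.star_def, Complex.mul_conj, Function.comp_apply]
        rfl

lemma inv_eq_cfc (hA : A.IsHermitian) (hAu : IsUnit A) : A⁻¹ = cfc (fun x : ℝ => x⁻¹) A := by
  rw [nonsing_inv_eq_ringInverse, cfc_ringInverse_id (R := ℝ) A hAu hA.isSelfAdjoint]

lemma re_trace_mul_self_mul_inv (hA : A.IsHermitian) (hB : B.IsHermitian) (hBu : IsUnit B) :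
    (A * A * B⁻¹).trace.re =
      ∑ i, ∑ j, hA.eigenvalues i ^ 2 * (hB.eigenvalues j)⁻¹ * eigenOverlap hA hB i j := by
  rw [hB.inv_eq_cfc hBu, ← sq, ← cfc_pow_id (R := ℝ) A 2 hA.isSelfAdjoint,
    hA.re_trace_cfc_mul_cfc hB]

end IsHermitian

end Matrix

section TensorFam

variable {q d : ℕ}

lemma tensorFam_mul (A B : Fin q → Matrix (Fin d) (Fin d) ℂ) :
    tensorFam A * tensorFam B = tensorFam fun t => A t * B t := by
  ext i j
  simp only [tensorFam, mul_apply, of_apply, Finset.prod_univ_sum, Fintype.piFinset_univ,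
    Finset.prod_mul_distrib]

lemma trace_tensorFam (A : Fin q → Matrix (Fin d) (Fin d) ℂ) :
    (tensorFam A).trace = ∏ t, (A t).trace := by
  simp only [trace, diag_apply, tensorFam, of_apply, Finset.prod_univ_sum, Fintype.piFinset_univ]

lemma tensorFam_one : tensorFam (fun _ : Fin q => (1 : Matrix (Fin d) (Fin d) ℂ)) = 1 := by
  ext i j
  simp only [tensorFam, of_apply, one_apply, Finset.prod_boole, Finset.mem_univ, true_implies,
    funext_iff]

lemma conjTranspose_tensorFam (A : Fin q → Matrix (Fin d) (Fin d) ℂ) :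
    (tensorFam A)ᴴ = tensorFam fun t => (A t)ᴴ := by
  ext i j
  simp only [tensorFam, conjTranspose_apply, of_apply, star_prod]

open scoped MatrixOrder Matrix.Norms.L2Operator in
lemma posSemidef_tensorFam {A : Fin q → Matrix (Fin d) (Fin d) ℂ}
    (hA : ∀ t, (A t).PosSemidef) : (tensorFam A).PosSemidef := by
  choose B hB using fun t => CStarAlgebra.nonneg_iff_eq_star_mul_self.mp (hA t).nonneg
  rw [funext hB]
  simpa only [conjTranspose_tensorFam, tensorFam_mul, star_eq_conjTranspose] using
    posSemidef_conjTranspose_mul_self (tensorFam B)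

lemma tensorFam_mul_tensorFam_inv {A : Fin q → Matrix (Fin d) (Fin d) ℂ}
    (hA : ∀ t, IsUnit (A t)) : tensorFam A * tensorFam (fun t => (A t)⁻¹) = 1 := by
  rw [tensorFam_mul, ← tensorFam_one]
  congr 1
  funext t
  exact mul_nonsing_inv _ ((isUnit_iff_isUnit_det _).mp (hA t))

lemma inv_tensorFam {A : Fin q → Matrix (Fin d) (Fin d) ℂ} (hA : ∀ t, IsUnit (A t)) :
    (tensorFam A)⁻¹ = tensorFam fun t => (A t)⁻¹ :=
  inv_eq_right_inv (tensorFam_mul_tensorFam_inv hA)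

lemma posDef_tensorFam {A : Fin q → Matrix (Fin d) (Fin d) ℂ} (hA : ∀ t, (A t).PosDef) :
    (tensorFam A).PosDef :=
  (posSemidef_tensorFam fun t => (hA t).posSemidef).posDef_iff_isUnit.mpr
    (IsUnit.of_mul_eq_one _ (tensorFam_mul_tensorFam_inv fun t => (hA t).isUnit))

lemma isDensity_tensorFam {A : Fin q → Matrix (Fin d) (Fin d) ℂ} (hA : ∀ t, IsDensity (A t)) :
    IsDensity (tensorFam A) := by
  refine ⟨posSemidef_tensorFam fun t => (hA t).1, ?_⟩
  rw [trace_tensorFam]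
  exact Finset.prod_eq_one fun t _ => (hA t).2

end TensorFam

namespace Covert

section Spectral

variable {n : Type*} [Fintype n] [DecidableEq n]

lemma matLog_eq_cfc {A : Matrix n n ℂ} (hA : A.IsHermitian) : matLog A = cfc Real.log A := by
  rw [matLog, matFun, dif_pos hA, hA.cfc_eq]

lemma eigMin_le_eigenvalues {A : Matrix n n ℂ} (hA : A.IsHermitian) (i : n) :
    eigMin hA ≤ hA.eigenvalues i :=
  ciInf_le (Set.finite_range _).bddBelow i

lemma IsDensity.nonempty {ρ : Matrix n n ℂ} (hρ : IsDensity ρ) : Nonempty n := by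
  by_contra h
  rw [not_nonempty_iff] at h
  simpa [trace] using hρ.2

lemma IsDensity.sum_eigenvalues {ρ : Matrix n n ℂ} (hρ : IsDensity ρ) :
    ∑ i, hρ.1.1.eigenvalues i = 1 := by
  have h := hρ.2
  rw [hρ.1.1.trace_eq_sum_eigenvalues] at h
  simpa using congrArg Complex.re h

theorem qRelEntropy_le_re_trace_mul_self_mul_inv_sub_one {ρ σ : Matrix n n ℂ}
    (hρ : IsDensity ρ) (hσ : σ.PosDef) :
    qRelEntropy ρ σ ≤ (ρ * ρ * σ⁻¹).trace.re - 1 := by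
  set p := hρ.1.1.eigenvalues
  set s := hσ.1.eigenvalues
  set c := hρ.1.1.eigenOverlap hσ.1
  have hent : (ρ * matLog ρ).trace.re = ∑ i, ∑ j, p i * Real.log (p i) * c i j := by
    have h : ρ * matLog ρ = cfc (id : ℝ → ℝ) ρ * cfc Real.log ρ := by
      rw [matLog_eq_cfc hρ.1.1, cfc_id ℝ ρ hρ.1.1.isSelfAdjoint]
    rw [h, hρ.1.1.re_trace_cfc_mul_cfc]
    simp only [IsHermitian.eigenOverlap_self, mul_ite, mul_one, mul_zero, Finset.sum_ite_eq,
      Finset.mem_univ, if_true, ← Finset.mul_sum, IsHermitian.sum_eigenOverlap, c]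
    rfl
  have hcross : (ρ * matLog σ).trace.re = ∑ i, ∑ j, p i * Real.log (s j) * c i j := by
    have h : ρ * matLog σ = cfc (id : ℝ → ℝ) ρ * cfc Real.log σ := by
      rw [matLog_eq_cfc hσ.1, cfc_id ℝ ρ hρ.1.1.isSelfAdjoint]
    rw [h, hρ.1.1.re_trace_cfc_mul_cfc]
    rfl
  have hone : 1 = ∑ i, ∑ j, p i * c i j := by
    simp only [← Finset.mul_sum, c, IsHermitian.sum_eigenOverlap, mul_one]
    exact hρ.sum_eigenvalues.symm
  have key := Finset.sum_le_sum fun i (_ : i ∈ Finset.univ) =>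
    Finset.sum_le_sum fun j (_ : j ∈ Finset.univ) =>
      mul_le_mul_of_nonneg_right
        (Real.mul_log_sub_mul_log_le (hρ.1.eigenvalues_nonneg i) (hσ.eigenvalues_pos j))
        (IsHermitian.eigenOverlap_nonneg hρ.1.1 hσ.1 i j)
  simp only [sub_mul, Finset.sum_sub_distrib] at key
  rw [qRelEntropy, Matrix.mul_sub, trace_sub, Complex.sub_re, hent, hcross,
    hρ.1.1.re_trace_mul_self_mul_inv hσ.1 hσ.isUnit, hone]
  linarith

lemma re_trace_mul_self_mul_inv_le_inv {ρ σ : Matrix n n ℂ} (hρ : IsDensity ρ) (hσ : σ.PosDef)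
    {lam : ℝ} (hlam : 0 < lam) (hmin : ∀ j, lam ≤ hσ.1.eigenvalues j) :
    (ρ * ρ * σ⁻¹).trace.re ≤ lam⁻¹ := by
  set p := hρ.1.1.eigenvalues
  have hp : ∀ i, 0 ≤ p i := hρ.1.eigenvalues_nonneg
  have hp1 : ∀ i, p i ≤ 1 := fun i =>
    hρ.sum_eigenvalues ▸ Finset.single_le_sum (fun j _ => hp j) (Finset.mem_univ i)
  rw [hρ.1.1.re_trace_mul_self_mul_inv hσ.1 hσ.isUnit]
  calc ∑ i, ∑ j, p i ^ 2 * (hσ.1.eigenvalues j)⁻¹ * hρ.1.1.eigenOverlap hσ.1 i j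
      ≤ ∑ i, ∑ j, p i ^ 2 * lam⁻¹ * hρ.1.1.eigenOverlap hσ.1 i j := by
        gcongr with i _ j _
        · exact IsHermitian.eigenOverlap_nonneg _ _ i j
        · exact hmin j
    _ = ∑ i, p i ^ 2 * lam⁻¹ := by
        simp only [← Finset.mul_sum, IsHermitian.sum_eigenOverlap, mul_one]
    _ ≤ ∑ i, p i * lam⁻¹ := by
        gcongr with i _
        nlinarith [hp i, hp1 i]
    _ = lam⁻¹ := by rw [← Finset.sum_mul, hρ.sum_eigenvalues, one_mul]

end Spectral

section Mixture

variable {ι m : Type*} [Fintype ι] [Nonempty ι] [Fintype m]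

lemma isDensity_smul_sum [DecidableEq m] {ρ : ι → Matrix m m ℂ} (hρ : ∀ j, IsDensity (ρ j)) :
    IsDensity ((Fintype.card ι : ℂ)⁻¹ • ∑ j, ρ j) := by
  have hN : (Fintype.card ι : ℂ) ≠ 0 := Nat.cast_ne_zero.mpr Fintype.card_ne_zero
  refine ⟨(posSemidef_sum _ fun j _ => (hρ j).1).smul ?_, ?_⟩
  · rw [← Complex.ofReal_natCast, ← Complex.ofReal_inv]
    exact Complex.zero_le_real.mpr (by positivity)
  · simp only [trace_smul, trace_sum, fun j => (hρ j).2, Finset.sum_const, Finset.card_univ,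
      nsmul_eq_mul, mul_one, smul_eq_mul, inv_mul_cancel₀ hN]

lemma trace_smul_sum_mul_smul_sum_mul [DecidableEq ι] (X : ι → Matrix m m ℂ) (Y : Matrix m m ℂ)
    (T : ℂ) (hXY : ∀ j k, (X j * X k * Y).trace = if j = k then T else 1) :
    (((Fintype.card ι : ℂ)⁻¹ • ∑ j, X j) * ((Fintype.card ι : ℂ)⁻¹ • ∑ j, X j) * Y).trace =
      (Fintype.card ι : ℂ)⁻¹ * (T - 1) + 1 := by
  set N : ℂ := (Fintype.card ι : ℂ)
  have hN : N ≠ 0 := Nat.cast_ne_zero.mpr Fintype.card_ne_zero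
  have hrow : ∀ j, ∑ k, (X j * X k * Y).trace = T - 1 + N := by
    intro j
    have hsplit : ∀ k, (if j = k then T else 1) = (if j = k then T - 1 else 0) + 1 := fun k => by
      split_ifs <;> ring
    simp only [hXY, hsplit, Finset.sum_add_distrib, Finset.sum_ite_eq, Finset.mem_univ, if_true,
      Finset.sum_const, Finset.card_univ, nsmul_eq_mul, mul_one, N]
  have hsum : ((∑ j, X j) * (∑ j, X j) * Y).trace = N * (T - 1 + N) := by
    rw [Finset.sum_mul_sum]
    simp only [Finset.sum_mul, trace_sum, hrow, Finset.sum_const, Finset.card_univ,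
      nsmul_eq_mul, N]
  rw [smul_mul_smul_comm, smul_mul_assoc, trace_smul, hsum, smul_eq_mul]
  field_simp

end Mixture

section PPM

variable {q d : ℕ}

/-- The state `ρ(j + 1)` of the paper: `ρbar` in slot `j` (zero-based) and `ρ0` elsewhere. -/
noncomputable def ppmState (ρ0 ρbar : Matrix (Fin d) (Fin d) ℂ) (j : Fin q) :
    Matrix (Fin q → Fin d) (Fin q → Fin d) ℂ :=
  tensorFam fun t => if t = j then ρbar else ρ0

lemma isDensity_ppmState {ρ0 ρbar : Matrix (Fin d) (Fin d) ℂ} (hρ0 : IsDensity ρ0)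
    (hρbar : IsDensity ρbar) (j : Fin q) : IsDensity (ppmState ρ0 ρbar j) :=
  isDensity_tensorFam fun t => by
    split_ifs
    exacts [hρbar, hρ0]

lemma trace_ppmState_mul_ppmState_mul_inv {ρ0 ρbar : Matrix (Fin d) (Fin d) ℂ}
    (hρ0 : ρ0.trace = 1) (hρ0u : IsUnit ρ0) (hρbar : ρbar.trace = 1) (j k : Fin q) :
    (ppmState ρ0 ρbar j * ppmState ρ0 ρbar k * tensorFam fun _ => ρ0⁻¹).trace =
      if j = k then (ρbar * ρbar * ρ0⁻¹).trace else 1 := by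
  have hdet := (isUnit_iff_isUnit_det ρ0).mp hρ0u
  have hright : ∀ B : Matrix (Fin d) (Fin d) ℂ, (B * ρ0 * ρ0⁻¹).trace = B.trace := fun B => by
    rw [Matrix.mul_assoc, mul_nonsing_inv _ hdet, Matrix.mul_one]
  have hconj : ∀ B : Matrix (Fin d) (Fin d) ℂ, (ρ0 * B * ρ0⁻¹).trace = B.trace := fun B => by
    rw [trace_mul_cycle, nonsing_inv_mul _ hdet, Matrix.one_mul]
  rw [ppmState, ppmState, tensorFam_mul, tensorFam_mul, trace_tensorFam]
  split_ifs with hjk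
  · subst hjk
    rw [Finset.prod_eq_single j (fun t _ ht => by simp only [if_neg ht, hright, hρ0])
      (fun h => absurd (Finset.mem_univ j) h)]
    simp only [if_true]
  · refine Finset.prod_eq_one fun t _ => ?_
    by_cases htj : t = j <;> by_cases htk : t = k <;> simp_all

noncomputable def ppmMixture (q : ℕ) (ρ0 ρbar : Matrix (Fin d) (Fin d) ℂ) :
    Matrix (Fin q → Fin d) (Fin q → Fin d) ℂ :=
  (q : ℂ)⁻¹ • ∑ j : Fin q, ppmState ρ0 ρbar j

lemma isDensity_ppmMixture (hq : 1 ≤ q) {ρ0 ρbar : Matrix (Fin d) (Fin d) ℂ}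
    (hρ0 : IsDensity ρ0) (hρbar : IsDensity ρbar) : IsDensity (ppmMixture q ρ0 ρbar) := by
  have : Nonempty (Fin q) := ⟨⟨0, hq⟩⟩
  simpa [ppmMixture] using isDensity_smul_sum (isDensity_ppmState (q := q) hρ0 hρbar)

lemma re_trace_ppmMixture_mul_self_mul_inv (hq : 1 ≤ q) {ρ0 ρbar : Matrix (Fin d) (Fin d) ℂ}
    (hρ0 : ρ0.trace = 1) (hρ0u : IsUnit ρ0) (hρbar : ρbar.trace = 1) :
    (ppmMixture q ρ0 ρbar * ppmMixture q ρ0 ρbar * (tensorFam fun _ => ρ0)⁻¹).trace.re =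
      (q : ℝ)⁻¹ * ((ρbar * ρbar * ρ0⁻¹).trace.re - 1) + 1 := by
  have : Nonempty (Fin q) := ⟨⟨0, hq⟩⟩
  have h := trace_smul_sum_mul_smul_sum_mul _ _ _
    (trace_ppmState_mul_ppmState_mul_inv (q := q) hρ0 hρ0u hρbar)
  rw [Fintype.card_fin] at h
  rw [ppmMixture, inv_tensorFam fun _ => hρ0u, h, ← Complex.ofReal_natCast,
    ← Complex.ofReal_inv, Complex.add_re, Complex.re_ofReal_mul]
  simp

end PPM

end Covert

/-- relative-entropy (covertness) bound for the uniform mixture of the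
PPM states `ρ(j)` with respect to `ρ0^{⊗q}`. -/
theorem stmt11 {d q : ℕ} (hq : 1 ≤ q) (ρ0 ρbar : Matrix (Fin d) (Fin d) ℂ)
    (hρ0 : IsDensity ρ0) (hρ0pd : ρ0.PosDef) (hρbar : IsDensity ρbar) :
    qRelEntropy
        (((q : ℂ))⁻¹ • ∑ j : Fin q, tensorFam fun t => if t = j then ρbar else ρ0)
        (tensorFam fun _ => ρ0) ≤
      ((q : ℝ))⁻¹ * (((ρbar * ρbar * ρ0⁻¹).trace).re - 1) ∧
    ∀ lam : ℝ, 0 < lam → lam ≤ eigMin hρ0pd.1 →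
      qRelEntropy
          (((q : ℂ))⁻¹ • ∑ j : Fin q, tensorFam fun t => if t = j then ρbar else ρ0)
          (tensorFam fun _ => ρ0) ≤
        ((q : ℝ))⁻¹ * ((d : ℝ) / lam - 1) := by
  have hfirst := qRelEntropy_le_re_trace_mul_self_mul_inv_sub_one
    (isDensity_ppmMixture hq hρ0 hρbar) (posDef_tensorFam fun _ => hρ0pd)
  rw [re_trace_ppmMixture_mul_self_mul_inv hq hρ0.2 hρ0pd.isUnit hρbar.2,
    add_sub_cancel_right] at hfirst
  refine ⟨hfirst, fun lam hlam hle => hfirst.trans ?_⟩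
  have hT := re_trace_mul_self_mul_inv_le_inv hρbar hρ0pd hlam
    fun j => hle.trans (eigMin_le_eigenvalues _ j)
  have hd : (1 : ℝ) ≤ d := by exact_mod_cast Fin.pos_iff_nonempty.mpr hρbar.nonempty
  gcongr
  calc _ ≤ lam⁻¹ := hT
    _ ≤ d / lam := by
      rw [div_eq_mul_inv]
      exact le_mul_of_one_le_left (inv_nonneg.mpr hlam.le) hd
end

section
/- Let A and B be n×n Hermitian positive semidefinite complex matrices with ‖A − B‖₁ < λ_min(A). Then ‖√A − √B‖₁ ≤ n² · ‖A − B‖₁ / ( 2·√( λ_min(A) − ‖A − B‖₁ ) ), where √ denotes the positive semidefinite matrix square root. -/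
open Matrix BigOperators Finset
open scoped ComplexOrder

open Covert

/-- The positive semidefinite square root (the definition removed from Mathlib, restored). -/
noncomputable def Matrix.PosSemidef.sqrt {n : Type*} [Fintype n] [DecidableEq n] {𝕜 : Type*}
    [RCLike 𝕜] {A : Matrix n n 𝕜} (hA : A.PosSemidef) : Matrix n n 𝕜 :=
  hA.1.eigenvectorUnitary.1 * diagonal ((↑) ∘ (√·) ∘ hA.1.eigenvalues) *
    (star hA.1.eigenvectorUnitary : Matrix n n 𝕜)

/-! The difference `Δ = √A - √B` solves the Sylvester equation `√A Δ + Δ √B = A - B`.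
If `a ≤ A` and `b ≤ B` in the Loewner order then `√a ≤ √A` and `√b ≤ √B`, so pairing
the equation with `Δ` gives `(√a + √b) ‖Δ‖_F² ≤ Re tr (Δ (A - B)) ≤ ‖Δ‖_F ‖A - B‖_F`.
Take `a = λ_min(A)` and `b = λ_min(A) - ‖A - B‖₁`: this works because every eigenvalue
of `A - B` is at most `‖A - B‖_F ≤ ‖A - B‖₁`. Finally `‖Δ‖₁ ≤ √n ‖Δ‖_F` and `√n ≤ n²`. -/

open scoped MatrixOrder

namespace Matrix

variable {n : Type*} [Fintype n] {𝕜 : Type*} [RCLike 𝕜]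

lemma re_trace_le_re_trace {M N : Matrix n n 𝕜} (h : M ≤ N) :
    RCLike.re M.trace ≤ RCLike.re N.trace :=
  (RCLike.le_iff_re_im.mp (OrderHomClass.mono (tracePositiveLinearMap n ℝ 𝕜) h)).1

variable [DecidableEq n]

lemma IsHermitian.algebraMap_le_iff {H : Matrix n n 𝕜} (hH : H.IsHermitian) {r : ℝ} :
    algebraMap ℝ _ r ≤ H ↔ ∀ i, r ≤ hH.eigenvalues i := by
  rw [algebraMap_le_iff_le_spectrum hH.isSelfAdjoint, hH.spectrum_real_eq_range_eigenvalues,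
    Set.forall_mem_range]

lemma IsHermitian.le_algebraMap_iff {H : Matrix n n 𝕜} (hH : H.IsHermitian) {r : ℝ} :
    H ≤ algebraMap ℝ _ r ↔ ∀ i, hH.eigenvalues i ≤ r := by
  rw [le_algebraMap_iff_spectrum_le hH.isSelfAdjoint, hH.spectrum_real_eq_range_eigenvalues,
    Set.forall_mem_range]

lemma IsHermitian.trace_cfc {H : Matrix n n 𝕜} (hH : H.IsHermitian) (f : ℝ → ℝ) :
    (cfc f H).trace = ∑ i, (f (hH.eigenvalues i) : 𝕜) := by
  rw [hH.cfc_eq, IsHermitian.cfc, Unitary.conjStarAlgAut_apply, trace_mul_cycle,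
    Unitary.coe_star_mul_self, one_mul, trace_diagonal]
  rfl

lemma mul_re_trace_mul_self_le {Δ M : Matrix n n 𝕜} (hΔ : Δ.IsHermitian) {r : ℝ}
    (h : algebraMap ℝ _ r ≤ M) : r * RCLike.re (Δ * Δ).trace ≤ RCLike.re (Δ * M * Δ).trace := by
  have := re_trace_le_re_trace (star_left_conjugate_le_conjugate h Δ)
  rwa [star_eq_conjTranspose, hΔ.eq, Algebra.algebraMap_eq_smul_one, mul_smul_comm, mul_one,
    smul_mul_assoc, trace_smul, RCLike.smul_re] at this

lemma PosSemidef.sqrt_eq_cfc {A : Matrix n n 𝕜} (hA : A.PosSemidef) :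
    hA.sqrt = cfc Real.sqrt A := by
  rw [hA.1.cfc_eq]
  rfl

lemma PosSemidef.isHermitian_sqrt {A : Matrix n n 𝕜} (hA : A.PosSemidef) :
    hA.sqrt.IsHermitian := by
  rw [hA.sqrt_eq_cfc]
  exact cfc_predicate _ _

lemma PosSemidef.sqrt_mul_self {A : Matrix n n 𝕜} (hA : A.PosSemidef) :
    hA.sqrt * hA.sqrt = A := by
  have hA' : 0 ≤ A := nonneg_iff_posSemidef.mpr hA
  rw [hA.sqrt_eq_cfc, ← cfc_mul _ _ A]
  conv_rhs => rw [← cfc_id ℝ A]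
  exact cfc_congr fun x hx => Real.mul_self_sqrt (spectrum_nonneg_of_nonneg hA' hx)

lemma PosSemidef.algebraMap_sqrt_le_sqrt {A : Matrix n n 𝕜} (hA : A.PosSemidef) {r : ℝ}
    (h : algebraMap ℝ _ r ≤ A) : algebraMap ℝ _ √r ≤ hA.sqrt := by
  rw [hA.sqrt_eq_cfc]
  refine algebraMap_le_cfc _ _ _ fun x hx => Real.sqrt_le_sqrt ?_
  exact (algebraMap_le_iff_le_spectrum hA.1.isSelfAdjoint).mp h x hx

end Matrix

namespace Covert

variable {n : Type*} [Fintype n] [DecidableEq n]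

lemma re_trace_conjTranspose_mul_self_eq_sum_eigenvalues (X : Matrix n n ℂ) :
    (Xᴴ * X).trace.re = ∑ i, (isHermitian_conjTranspose_mul_self X).eigenvalues i := by
  simp [(isHermitian_conjTranspose_mul_self X).trace_eq_sum_eigenvalues, Complex.re_sum]

lemma traceNorm_nonneg (X : Matrix n n ℂ) : 0 ≤ traceNorm X :=
  sum_nonneg fun _ _ => Real.sqrt_nonneg _

lemma frobeniusNorm_nonneg (X : Matrix n n ℂ) : 0 ≤ frobeniusNorm X :=
  Real.sqrt_nonneg _

lemma frobeniusNorm_sq (X : Matrix n n ℂ) : frobeniusNorm X ^ 2 = (Xᴴ * X).trace.re := by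
  refine Real.sq_sqrt ?_
  rw [re_trace_conjTranspose_mul_self_eq_sum_eigenvalues]
  exact sum_nonneg fun i _ => eigenvalues_conjTranspose_mul_self_nonneg X i

lemma frobeniusNorm_le_traceNorm (X : Matrix n n ℂ) : frobeniusNorm X ≤ traceNorm X := by
  have hμ := eigenvalues_conjTranspose_mul_self_nonneg X
  rw [frobeniusNorm, traceNorm, re_trace_conjTranspose_mul_self_eq_sum_eigenvalues,
    Real.sqrt_le_iff]
  refine ⟨sum_nonneg fun i _ => Real.sqrt_nonneg _, ?_⟩
  calc ∑ i, (isHermitian_conjTranspose_mul_self X).eigenvalues i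
      = ∑ i, √((isHermitian_conjTranspose_mul_self X).eigenvalues i) ^ 2 := by
        simp only [Real.sq_sqrt (hμ _)]
    _ ≤ _ := sum_sq_le_sq_sum_of_nonneg fun i _ => Real.sqrt_nonneg _

lemma traceNorm_le_sqrt_card_mul_frobeniusNorm (X : Matrix n n ℂ) :
    traceNorm X ≤ √(Fintype.card n) * frobeniusNorm X := by
  have := Real.sum_sqrt_mul_sqrt_le univ (eigenvalues_conjTranspose_mul_self_nonneg X)
    (fun _ => zero_le_one)
  rw [frobeniusNorm, re_trace_conjTranspose_mul_self_eq_sum_eigenvalues]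
  simpa [traceNorm, mul_comm] using this

lemma re_trace_conjTranspose_mul_le (X Y : Matrix n n ℂ) :
    (Xᴴ * Y).trace.re ≤ frobeniusNorm X * frobeniusNorm Y := by
  let e : Matrix n n ℂ → EuclideanSpace ℂ (n × n) := fun M => WithLp.toLp 2 fun p => M p.1 p.2
  have he : ∀ M N, inner ℂ (e M) (e N) = (Mᴴ * N).trace := by
    intro M N
    simp only [e, PiLp.inner_apply, trace, mul_apply, Fintype.sum_prod_type, diag_apply,
      conjTranspose_apply, RCLike.inner_apply]
    rw [Finset.sum_comm]
    simp [mul_comm]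
  have hF : ∀ M, frobeniusNorm M = ‖e M‖ := fun M => by
    rw [@norm_eq_sqrt_re_inner ℂ _ _ _ _ (e M), he]
    rfl
  rw [hF, hF, ← he]
  exact re_inner_le_norm (𝕜 := ℂ) (e X) (e Y)

end Covert

namespace Matrix

variable {n : Type*} [Fintype n] [DecidableEq n]

lemma IsHermitian.frobeniusNorm_sq {H : Matrix n n ℂ} (hH : H.IsHermitian) :
    frobeniusNorm H ^ 2 = ∑ i, hH.eigenvalues i ^ 2 := by
  rw [Covert.frobeniusNorm_sq, hH.eq, ← sq, ← cfc_pow_id (R := ℝ) H 2 hH.isSelfAdjoint,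
    hH.trace_cfc]
  simp only [Complex.re_sum]
  norm_cast

lemma IsHermitian.abs_eigenvalues_le_frobeniusNorm {H : Matrix n n ℂ} (hH : H.IsHermitian)
    (i : n) : |hH.eigenvalues i| ≤ frobeniusNorm H := by
  calc |hH.eigenvalues i| ≤ √(∑ j, hH.eigenvalues j ^ 2) :=
        Real.abs_le_sqrt (single_le_sum (fun j _ => sq_nonneg (hH.eigenvalues j)) (mem_univ i))
    _ = frobeniusNorm H := by rw [← hH.frobeniusNorm_sq, Real.sqrt_sq (frobeniusNorm_nonneg H)]

lemma IsHermitian.le_algebraMap_traceNorm {H : Matrix n n ℂ} (hH : H.IsHermitian) :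
    H ≤ algebraMap ℝ _ (traceNorm H) :=
  hH.le_algebraMap_iff.mpr fun i => (le_abs_self _).trans <|
    (hH.abs_eigenvalues_le_frobeniusNorm i).trans (frobeniusNorm_le_traceNorm H)

lemma IsHermitian.algebraMap_eigMin_le {H : Matrix n n ℂ} (hH : H.IsHermitian) :
    algebraMap ℝ _ (eigMin hH) ≤ H :=
  hH.algebraMap_le_iff.mpr fun i => ciInf_le (Finite.bddBelow_range _) i

theorem PosSemidef.frobeniusNorm_sqrt_sub_sqrt_mul_le {A B : Matrix n n ℂ} (hA : A.PosSemidef)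
    (hB : B.PosSemidef) {a b : ℝ} (ha : algebraMap ℝ _ a ≤ A) (hb : algebraMap ℝ _ b ≤ B) :
    frobeniusNorm (hA.sqrt - hB.sqrt) * (√a + √b) ≤ frobeniusNorm (A - B) := by
  set Δ := hA.sqrt - hB.sqrt
  have hΔ : Δ.IsHermitian := hA.isHermitian_sqrt.sub hB.isHermitian_sqrt
  have hAB : A - B = hA.sqrt * Δ + Δ * hB.sqrt := by
    simp only [Δ, mul_sub, sub_mul, hA.sqrt_mul_self, hB.sqrt_mul_self]
    abel
  have hlow : (√a + √b) * frobeniusNorm Δ ^ 2 ≤ (Δ * (A - B)).trace.re := by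
    have hsplit : (Δ * (A - B)).trace = (Δ * hA.sqrt * Δ).trace + (Δ * hB.sqrt * Δ).trace := by
      rw [hAB, mul_add, trace_add, ← mul_assoc, trace_mul_comm Δ (Δ * hB.sqrt)]
    rw [frobeniusNorm_sq, hΔ.eq, hsplit, Complex.add_re, add_mul]
    exact add_le_add (mul_re_trace_mul_self_le hΔ (hA.algebraMap_sqrt_le_sqrt ha))
      (mul_re_trace_mul_self_le hΔ (hB.algebraMap_sqrt_le_sqrt hb))
  have hup : (Δ * (A - B)).trace.re ≤ frobeniusNorm Δ * frobeniusNorm (A - B) := by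
    simpa only [hΔ.eq] using re_trace_conjTranspose_mul_le Δ (A - B)
  rcases (frobeniusNorm_nonneg Δ).eq_or_lt with hΔ0 | hΔ0
  · rw [← hΔ0, zero_mul]
    exact frobeniusNorm_nonneg _
  · refine le_of_mul_le_mul_right ?_ hΔ0
    calc frobeniusNorm Δ * (√a + √b) * frobeniusNorm Δ = (√a + √b) * frobeniusNorm Δ ^ 2 := by
          ring
      _ ≤ frobeniusNorm Δ * frobeniusNorm (A - B) := hlow.trans hup
      _ = frobeniusNorm (A - B) * frobeniusNorm Δ := mul_comm _ _

end Matrix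

/-- perturbation bound for the positive semidefinite square root in trace norm. -/
theorem stmt13 {n : ℕ} (A B : Matrix (Fin n) (Fin n) ℂ)
    (hA : A.PosSemidef) (hB : B.PosSemidef)
    (hclose : traceNorm (A - B) < eigMin hA.1) :
    traceNorm (hA.sqrt - hB.sqrt) ≤
      (n : ℝ) ^ 2 * traceNorm (A - B) / (2 * Real.sqrt (eigMin hA.1 - traceNorm (A - B))) := by
  set t := traceNorm (A - B)
  set c := eigMin hA.1 - t
  have hc : 0 < √c := Real.sqrt_pos.mpr (sub_pos.mpr hclose)
  have hA_ge : algebraMap ℝ _ (eigMin hA.1) ≤ A := hA.1.algebraMap_eigMin_le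
  have hB_ge : algebraMap ℝ _ c ≤ B := by
    calc algebraMap ℝ _ c = algebraMap ℝ _ (eigMin hA.1) - algebraMap ℝ _ t := map_sub _ _ _
      _ ≤ A - (A - B) := sub_le_sub hA_ge (hA.1.sub hB.1).le_algebraMap_traceNorm
      _ = B := sub_sub_cancel A B
  have hsqrt : 2 * √c ≤ √(eigMin hA.1) + √c := by
    linarith [Real.sqrt_le_sqrt (sub_le_self (eigMin hA.1) (traceNorm_nonneg (A - B)))]
  have hF : frobeniusNorm (hA.sqrt - hB.sqrt) ≤ t / (2 * √c) := by
    rw [le_div_iff₀ (by positivity)]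
    calc frobeniusNorm (hA.sqrt - hB.sqrt) * (2 * √c)
        ≤ frobeniusNorm (hA.sqrt - hB.sqrt) * (√(eigMin hA.1) + √c) :=
          mul_le_mul_of_nonneg_left hsqrt (frobeniusNorm_nonneg _)
      _ ≤ frobeniusNorm (A - B) := hA.frobeniusNorm_sqrt_sub_sqrt_mul_le hB hA_ge hB_ge
      _ ≤ t := frobeniusNorm_le_traceNorm _
  have hn : √(n : ℝ) ≤ (n : ℝ) ^ 2 := Real.sqrt_le_iff.mpr
    ⟨by positivity, by rw [← pow_mul]; exact_mod_cast Nat.le_self_pow (by norm_num) n⟩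
  calc traceNorm (hA.sqrt - hB.sqrt) ≤ √(n : ℝ) * frobeniusNorm (hA.sqrt - hB.sqrt) := by
        simpa using traceNorm_le_sqrt_card_mul_frobeniusNorm (hA.sqrt - hB.sqrt)
    _ ≤ (n : ℝ) ^ 2 * (t / (2 * √c)) := by gcongr; exact frobeniusNorm_nonneg _
    _ = _ := by ring
end
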